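/- Let r ≥ 1 and n ≥ 2 be integers and a_1, …, a_n ∈ ℤ/rℤ. Assume that for every index i the family (a_j)_{j ≠ i} generates ℤ/rℤ, and that a_2 + ⋯ + a_n ≠ 0 in ℤ/rℤ. Define Γ_1 = { m = (m_1,…,m_n) ∈ ℕ^n : m_1 a_1 + ⋯ + m_n a_n = −(a_2 + ⋯ + a_n) in ℤ/rℤ }. Then Γ_1 contains at least two distinct minimal elements with respect to the componentwise partial order on ℕ^n. -/
import Mathlib


/-!
Graf, "The generalized Lipman–Zariski problem", Claim 3.6: in the analysis of
cyclic quotient singularities of type `(1/r)(a_1, …, a_n)`, the sub-semigroup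
`Γ_1 ⊆ ℕ^n` of exponents of monomials `x^m` with `α(m) = −(a_2 + ⋯ + a_n)`
contains at least two distinct minimal elements (with respect to the
componentwise partial order), provided that each `n-1` of the weights generate
`ℤ/rℤ` and `a_2 + ⋯ + a_n ≠ 0`.
-/

/-- Every element of `ZMod r` (r ≥ 1) is a nonnegative combination of a generating
set, with a prescribed coordinate unused. -/
lemma aux_repr {r n : ℕ} (hr : 1 ≤ r) (a : Fin n → ZMod r) (i : Fin n)
    (hgen : AddSubgroup.closure (a '' {j | j ≠ i}) = (⊤ : AddSubgroup (ZMod r)))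
    (c : ZMod r) :
    ∃ m : Fin n → ℕ, m i = 0 ∧ ∑ j, (m j : ZMod r) * a j = c := by
  set S : Set (ZMod r) := a '' {j | j ≠ i}
  -- the target set, as an AddSubmonoid
  let T : AddSubmonoid (ZMod r) :=
    { carrier := {x | ∃ m : Fin n → ℕ, m i = 0 ∧ ∑ j, (m j : ZMod r) * a j = x}
      zero_mem' := ⟨0, rfl, by simp⟩
      add_mem' := by
        rintro x y ⟨m, hmi, hm⟩ ⟨m', hmi', hm'⟩
        refine ⟨m + m', by simp [hmi, hmi'], ?_⟩
        rw [← hm, ← hm', ← Finset.sum_add_distrib]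
        congr 1; funext j; push_cast [Pi.add_apply]; ring }
  have hST : S ⊆ T := by
    rintro x ⟨j, hj, rfl⟩
    refine ⟨Pi.single j 1, ?_, ?_⟩
    · simp [Pi.single_apply, Ne.symm hj]
    · rw [Fintype.sum_eq_single j (fun k hk => by simp [Pi.single_apply, hk])]
      simp
  -- the submonoid closure of S is a subgroup (finite setting): -x = (r-1) • x
  have hneg : ∀ x ∈ AddSubmonoid.closure S, -x ∈ AddSubmonoid.closure S := by
    intro x hx
    have h0 : r • x = 0 := by
      rw [nsmul_eq_mul, ZMod.natCast_self, zero_mul]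
    have : -x = (r - 1) • x := by
      have : (r - 1) • x + x = r • x := by
        rw [← succ_nsmul, Nat.sub_add_cancel hr]
      rw [h0] at this
      exact neg_eq_of_add_eq_zero_left this
    rw [this]
    exact nsmul_mem hx _
  let G : AddSubgroup (ZMod r) :=
    { toAddSubmonoid := AddSubmonoid.closure S
      neg_mem' := fun hx => hneg _ hx }
  have hc : c ∈ AddSubmonoid.closure S := by
    have : AddSubgroup.closure S ≤ G :=
      AddSubgroup.closure_le G |>.mpr AddSubmonoid.subset_closure
    have := this (by rw [hgen]; trivial : c ∈ AddSubgroup.closure S)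
    exact this
  exact (AddSubmonoid.closure_le.mpr hST) hc

/-- Dickson: below any element of a set in `Fin n → ℕ` there is a minimal element. -/
lemma aux_min {n : ℕ} (S : Set (Fin n → ℕ)) {x : Fin n → ℕ} (hx : x ∈ S) :
    ∃ m ∈ S, m ≤ x ∧ ∀ m' ∈ S, m' ≤ m → m' = m := by
  have wf : WellFoundedLT (Fin n → ℕ) := inferInstance
  obtain ⟨m, ⟨hmS, hmx⟩, hmin⟩ := wf.wf.has_min {y ∈ S | y ≤ x} ⟨x, hx, le_refl x⟩
  refine ⟨m, hmS, hmx, fun m' hm' hle => ?_⟩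
  by_contra hne
  exact hmin m' ⟨hm', hle.trans hmx⟩ (lt_of_le_of_ne hle hne)


/-- **Graf, Claim 3.6.**  Let `r ≥ 1`, `n ≥ 2` and `a_1, …, a_n ∈ ℤ/rℤ` be such
that for every `i` the family `(a_j)_{j ≠ i}` generates `ℤ/rℤ` and such that
`a_2 + ⋯ + a_n ≠ 0`.  Then
`Γ_1 = { m ∈ ℕ^n : m_1 a_1 + ⋯ + m_n a_n = −(a_2 + ⋯ + a_n) }`
contains at least two distinct minimal elements for the componentwise order. -/
theorem gamma_one_two_minimal_elements
    (r : ℕ) (hr : 1 ≤ r) (n : ℕ) (hn : 2 ≤ n) (a : Fin n → ZMod r)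
    (hgen : ∀ i : Fin n,
      AddSubgroup.closure (a '' {j | j ≠ i}) = (⊤ : AddSubgroup (ZMod r)))
    (hne : ∑ j ∈ Finset.univ.erase (⟨0, by omega⟩ : Fin n), a j ≠ 0) :
    ∃ m₁ m₂ : Fin n → ℕ, m₁ ≠ m₂ ∧
      m₁ ∈ { m : Fin n → ℕ | ∑ j, (m j : ZMod r) * a j = -(∑ j ∈ Finset.univ.erase (⟨0, by omega⟩ : Fin n), a j) } ∧
      m₂ ∈ { m : Fin n → ℕ | ∑ j, (m j : ZMod r) * a j = -(∑ j ∈ Finset.univ.erase (⟨0, by omega⟩ : Fin n), a j) } ∧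
      (∀ m' ∈ { m : Fin n → ℕ | ∑ j, (m j : ZMod r) * a j = -(∑ j ∈ Finset.univ.erase (⟨0, by omega⟩ : Fin n), a j) }, m' ≤ m₁ → m' = m₁) ∧
      (∀ m' ∈ { m : Fin n → ℕ | ∑ j, (m j : ZMod r) * a j = -(∑ j ∈ Finset.univ.erase (⟨0, by omega⟩ : Fin n), a j) }, m' ≤ m₂ → m' = m₂) := by
  set c : ZMod r := -(∑ j ∈ Finset.univ.erase (⟨0, by omega⟩ : Fin n), a j) with hc
  set Γ : Set (Fin n → ℕ) := { m : Fin n → ℕ | ∑ j, (m j : ZMod r) * a j = c } with hΓ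
  have hc0 : c ≠ 0 := neg_ne_zero.mpr hne
  -- for each i, a minimal element of Γ whose i-th coordinate is 0
  have hM : ∀ i : Fin n, ∃ m ∈ Γ, m i = 0 ∧ ∀ m' ∈ Γ, m' ≤ m → m' = m := by
    intro i
    obtain ⟨x, hxi, hx⟩ := aux_repr hr a i (hgen i) c
    obtain ⟨m, hmΓ, hmx, hmin⟩ := aux_min Γ hx
    exact ⟨m, hmΓ, Nat.le_zero.mp (hxi ▸ hmx i), hmin⟩
  choose M hMΓ hMzero hMmin using hM
  by_cases hall : ∀ i j : Fin n, M i = M j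
  · exfalso
    have i0 : Fin n := ⟨0, by omega⟩
    have hM0 : M i0 = 0 := by
      funext j
      rw [hall i0 j]
      exact hMzero j
    have := hMΓ i0
    rw [hM0] at this
    simp only [hΓ, Set.mem_setOf_eq] at this
    simp at this
    exact hc0 this.symm
  · push_neg at hall
    obtain ⟨i, j, hij⟩ := hall
    exact ⟨M i, M j, hij, hMΓ i, hMΓ j, hMmin i, hMmin j⟩
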